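/- arXiv:1802.02355 — 4 statements merged into one kernel-verified Lean document; each statement's English description precedes it below -/
import Mathlib

section
/- For n∈ℝ³ with n_h=(n₁,n₂)≠0, the vectors e₀(n) = (1/|n_h|)(-n₂, n₁, 0, 0) and e±(n) = (1/√2)(±i n₁n₃/(|n_h||n|), ±i n₂n₃/(|n_h||n|), ∓i |n_h|/|n|, 1) are eigenvectors of the matrix M(n) (defined below) with eigenvalues 0, +i|n_h|/|n|, and -i|n_h|/|n| respectively, and {e₀(n), e₊(n), e₋(n)} is an orthonormal family in ℂ⁴. -/
/-! Write `c = |n_h|/|n|` and `x_k = n_k n₃/(|n_h| |n|)`. Then `w = (x₁, x₂, -c)` is the unit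
vector orthogonal to `n` in the plane spanned by `n` and `e₃`, the last column of `M(n)` is
`(-c w, 0)` and its last row is `(0, 0, -1, 0)`. So `M(n)` maps `(w, 0) ↦ c (0, 0, 0, 1)` and
`(0, 0, 0, 1) ↦ -c (w, 0)`, and for either square root `ι` of `-1` the vector `(ι w, 1)/√2`
is an eigenvector for `ι c`; these are `e±(n)` for `ι = ±i`. Their orthonormality reduces to
`|w| = 1`, i.e. `|n_h|² + n₃² = |n|²`. The vector `e₀(n)` is horizontal, so it is killed by
`M(n)`, whose first two columns vanish, and it is orthogonal to `w` and to `e₄`. -/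

open Matrix Complex

/-- The eigenvector `e₀(n)` of the symbol `M(n)`. -/
noncomputable def e0vec (n₁ n₂ n₃ : ℝ) : Fin 4 → ℂ :=
  ![((-n₂ / Real.sqrt (n₁ ^ 2 + n₂ ^ 2) : ℝ) : ℂ),
    ((n₁ / Real.sqrt (n₁ ^ 2 + n₂ ^ 2) : ℝ) : ℂ), 0, 0]

/-- The eigenvector `e₊(n)` of the symbol `M(n)`. -/
noncomputable def epvec (n₁ n₂ n₃ : ℝ) : Fin 4 → ℂ :=
  fun i => ((1 / Real.sqrt 2 : ℝ) : ℂ) *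
    ![Complex.I * ((n₁ * n₃ / (Real.sqrt (n₁ ^ 2 + n₂ ^ 2) *
        Real.sqrt (n₁ ^ 2 + n₂ ^ 2 + n₃ ^ 2)) : ℝ) : ℂ),
      Complex.I * ((n₂ * n₃ / (Real.sqrt (n₁ ^ 2 + n₂ ^ 2) *
        Real.sqrt (n₁ ^ 2 + n₂ ^ 2 + n₃ ^ 2)) : ℝ) : ℂ),
      -Complex.I * ((Real.sqrt (n₁ ^ 2 + n₂ ^ 2) /
        Real.sqrt (n₁ ^ 2 + n₂ ^ 2 + n₃ ^ 2) : ℝ) : ℂ),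
      1] i

/-- The eigenvector `e₋(n)` of the symbol `M(n)`. -/
noncomputable def emvec (n₁ n₂ n₃ : ℝ) : Fin 4 → ℂ :=
  fun i => ((1 / Real.sqrt 2 : ℝ) : ℂ) *
    ![-Complex.I * ((n₁ * n₃ / (Real.sqrt (n₁ ^ 2 + n₂ ^ 2) *
        Real.sqrt (n₁ ^ 2 + n₂ ^ 2 + n₃ ^ 2)) : ℝ) : ℂ),
      -Complex.I * ((n₂ * n₃ / (Real.sqrt (n₁ ^ 2 + n₂ ^ 2) *
        Real.sqrt (n₁ ^ 2 + n₂ ^ 2 + n₃ ^ 2)) : ℝ) : ℂ),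
      Complex.I * ((Real.sqrt (n₁ ^ 2 + n₂ ^ 2) /
        Real.sqrt (n₁ ^ 2 + n₂ ^ 2 + n₃ ^ 2) : ℝ) : ℂ),
      1] i

/-- The Hermitian inner product on `ℂ⁴` (conjugate-linear in the first variable). -/
noncomputable def herm4 (a b : Fin 4 → ℂ) : ℂ :=
  ∑ i : Fin 4, (starRingEnd ℂ) (a i) * b i

noncomputable def horizontalRatio (n₁ n₂ n₃ : ℝ) : ℝ :=
  √(n₁ ^ 2 + n₂ ^ 2) / √(n₁ ^ 2 + n₂ ^ 2 + n₃ ^ 2)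

noncomputable def meridianCoord (m n₁ n₂ n₃ : ℝ) : ℝ :=
  m * n₃ / (√(n₁ ^ 2 + n₂ ^ 2) * √(n₁ ^ 2 + n₂ ^ 2 + n₃ ^ 2))

section Coordinates

variable {n₁ n₂ n₃ : ℝ}

theorem horizontalRatio_mul_meridianCoord (hn : n₁ ^ 2 + n₂ ^ 2 ≠ 0) (m : ℝ) :
    horizontalRatio n₁ n₂ n₃ * meridianCoord m n₁ n₂ n₃ =
      m * n₃ / (n₁ ^ 2 + n₂ ^ 2 + n₃ ^ 2) := by
  have hρ : √(n₁ ^ 2 + n₂ ^ 2) ≠ 0 := Real.sqrt_ne_zero'.2 (by positivity)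
  have hr : √(n₁ ^ 2 + n₂ ^ 2 + n₃ ^ 2) ^ 2 = n₁ ^ 2 + n₂ ^ 2 + n₃ ^ 2 :=
    Real.sq_sqrt (by positivity)
  rw [horizontalRatio, meridianCoord]
  conv_rhs => rw [← hr]
  field_simp

theorem horizontalRatio_sq (hn : n₁ ^ 2 + n₂ ^ 2 ≠ 0) :
    horizontalRatio n₁ n₂ n₃ ^ 2 = 1 - n₃ ^ 2 / (n₁ ^ 2 + n₂ ^ 2 + n₃ ^ 2) := by
  have hS : n₁ ^ 2 + n₂ ^ 2 + n₃ ^ 2 ≠ 0 := by positivity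
  rw [horizontalRatio, div_pow, Real.sq_sqrt (by positivity), Real.sq_sqrt (by positivity)]
  field_simp
  ring

theorem meridianCoord_sq_add_sq_add_horizontalRatio_sq (hn : n₁ ^ 2 + n₂ ^ 2 ≠ 0) :
    meridianCoord n₁ n₁ n₂ n₃ ^ 2 + meridianCoord n₂ n₁ n₂ n₃ ^ 2 +
      horizontalRatio n₁ n₂ n₃ ^ 2 = 1 := by
  have hS : n₁ ^ 2 + n₂ ^ 2 + n₃ ^ 2 ≠ 0 := by positivity
  rw [horizontalRatio, meridianCoord, meridianCoord, div_pow, div_pow, div_pow, mul_pow, mul_pow,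
    Real.sq_sqrt (by positivity), Real.sq_sqrt (by positivity)]
  field_simp
  ring

theorem neg_div_sqrt_sq_add_div_sqrt_sq (hn : n₁ ^ 2 + n₂ ^ 2 ≠ 0) :
    (-n₂ / √(n₁ ^ 2 + n₂ ^ 2)) ^ 2 + (n₁ / √(n₁ ^ 2 + n₂ ^ 2)) ^ 2 = 1 := by
  rw [div_pow, div_pow, Real.sq_sqrt (by positivity)]
  field_simp
  ring

variable (n₁ n₂ n₃) in
theorem neg_div_sqrt_mul_meridianCoord_add_div_sqrt_mul_meridianCoord :
    -n₂ / √(n₁ ^ 2 + n₂ ^ 2) * meridianCoord n₁ n₁ n₂ n₃ +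
      n₁ / √(n₁ ^ 2 + n₂ ^ 2) * meridianCoord n₂ n₁ n₂ n₃ = 0 := by
  rw [meridianCoord, meridianCoord]
  ring

end Coordinates

def symbolMatrix (c x₁ x₂ : ℝ) : Matrix (Fin 4) (Fin 4) ℂ :=
  !![0, 0, 0, -((c * x₁ : ℝ) : ℂ);
     0, 0, 0, -((c * x₂ : ℝ) : ℂ);
     0, 0, 0, ((c ^ 2 : ℝ) : ℂ);
     0, 0, -1, 0]

noncomputable def symbolEigenvector (ι : ℂ) (c x₁ x₂ : ℝ) : Fin 4 → ℂ :=
  fun i => ((1 / √2 : ℝ) : ℂ) * ![ι * (x₁ : ℂ), ι * (x₂ : ℂ), -ι * (c : ℂ), 1] i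

theorem symbolMatrix_mulVec_horizontal (c x₁ x₂ : ℝ) (a b : ℂ) :
    symbolMatrix c x₁ x₂ *ᵥ ![a, b, 0, 0] = 0 := by
  ext i
  fin_cases i <;> simp [symbolMatrix, mulVec, dotProduct, Fin.sum_univ_four]

theorem symbolMatrix_mulVec_symbolEigenvector {ι : ℂ} (hι : ι ^ 2 = -1) (c x₁ x₂ : ℝ) :
    symbolMatrix c x₁ x₂ *ᵥ symbolEigenvector ι c x₁ x₂ =
      (ι * c) • symbolEigenvector ι c x₁ x₂ := by
  ext i
  fin_cases i <;>
    simp only [symbolMatrix, symbolEigenvector, mulVec, dotProduct, Fin.sum_univ_four, of_apply,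
      cons_val', cons_val_fin_one, cons_val, cons_val_zero, cons_val_one, Pi.smul_apply,
      smul_eq_mul, ofReal_mul, ofReal_pow, Fin.zero_eta, Fin.mk_one, Fin.reduceFinMk,
      Fin.isValue] <;>
    ring_nf <;> simp only [hι] <;> ring

theorem herm4_horizontal (a b : ℝ) :
    herm4 ![(a : ℂ), b, 0, 0] ![(a : ℂ), b, 0, 0] = ((a ^ 2 + b ^ 2 : ℝ) : ℂ) := by
  simp only [herm4, Fin.sum_univ_four, cons_val_zero, cons_val_one, cons_val, conj_ofReal,
    map_zero, mul_zero, add_zero, ofReal_add, ofReal_pow, Fin.isValue]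
  ring

theorem herm4_horizontal_symbolEigenvector (a b : ℝ) (ι : ℂ) (c x₁ x₂ : ℝ) :
    herm4 ![(a : ℂ), b, 0, 0] (symbolEigenvector ι c x₁ x₂) =
      ((1 / √2 : ℝ) : ℂ) * ι * ((a * x₁ + b * x₂ : ℝ) : ℂ) := by
  simp only [herm4, symbolEigenvector, Fin.sum_univ_four, cons_val_zero, cons_val_one, cons_val,
    conj_ofReal, map_zero, zero_mul, add_zero, ofReal_add, ofReal_mul, Fin.isValue]
  ring

theorem herm4_symbolEigenvector (ι ι' : ℂ) {c x₁ x₂ : ℝ}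
    (h : x₁ ^ 2 + x₂ ^ 2 + c ^ 2 = 1) :
    herm4 (symbolEigenvector ι c x₁ x₂) (symbolEigenvector ι' c x₁ x₂) =
      (starRingEnd ℂ ι * ι' + 1) / 2 := by
  have h2 : ((√2 : ℝ) : ℂ) ^ 2 = 2 := by norm_cast; simp
  have h' : (x₁ : ℂ) ^ 2 + x₂ ^ 2 + c ^ 2 = 1 := by exact_mod_cast h
  simp only [herm4, symbolEigenvector, Fin.sum_univ_four, cons_val_zero, cons_val_one, cons_val,
    map_mul, map_neg, map_one, conj_ofReal, one_div, ofReal_inv, map_inv₀, Fin.isValue]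
  field_simp
  linear_combination 2 * (starRingEnd ℂ ι * ι') * h' - (starRingEnd ℂ ι * ι' + 1) * h2

/-- `e₀(n)`, `e₊(n)`, `e₋(n)` are eigenvectors of `M(n)` with
eigenvalues `0`, `+i|n_h|/|n|`, `-i|n_h|/|n|` respectively, and they form an
orthonormal family in `ℂ⁴`. -/
theorem eigenvectors_symbol_PA (n₁ n₂ n₃ : ℝ) (hn : n₁ ^ 2 + n₂ ^ 2 ≠ 0)
    (M : Matrix (Fin 4) (Fin 4) ℂ)
    (hM : M = !![0, 0, 0, -((n₁ * n₃ / (n₁ ^ 2 + n₂ ^ 2 + n₃ ^ 2) : ℝ) : ℂ);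
                 0, 0, 0, -((n₂ * n₃ / (n₁ ^ 2 + n₂ ^ 2 + n₃ ^ 2) : ℝ) : ℂ);
                 0, 0, 0, ((1 - n₃ ^ 2 / (n₁ ^ 2 + n₂ ^ 2 + n₃ ^ 2) : ℝ) : ℂ);
                 0, 0, -1, 0]) :
    M.mulVec (e0vec n₁ n₂ n₃) = 0 ∧
    M.mulVec (epvec n₁ n₂ n₃) =
      (Complex.I * ((Real.sqrt (n₁ ^ 2 + n₂ ^ 2) /
        Real.sqrt (n₁ ^ 2 + n₂ ^ 2 + n₃ ^ 2) : ℝ) : ℂ)) • epvec n₁ n₂ n₃ ∧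
    M.mulVec (emvec n₁ n₂ n₃) =
      (-(Complex.I * ((Real.sqrt (n₁ ^ 2 + n₂ ^ 2) /
        Real.sqrt (n₁ ^ 2 + n₂ ^ 2 + n₃ ^ 2) : ℝ) : ℂ))) • emvec n₁ n₂ n₃ ∧
    herm4 (e0vec n₁ n₂ n₃) (e0vec n₁ n₂ n₃) = 1 ∧
    herm4 (epvec n₁ n₂ n₃) (epvec n₁ n₂ n₃) = 1 ∧
    herm4 (emvec n₁ n₂ n₃) (emvec n₁ n₂ n₃) = 1 ∧
    herm4 (e0vec n₁ n₂ n₃) (epvec n₁ n₂ n₃) = 0 ∧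
    herm4 (e0vec n₁ n₂ n₃) (emvec n₁ n₂ n₃) = 0 ∧
    herm4 (epvec n₁ n₂ n₃) (emvec n₁ n₂ n₃) = 0 := by
  set c := horizontalRatio n₁ n₂ n₃
  set x₁ := meridianCoord n₁ n₁ n₂ n₃
  set x₂ := meridianCoord n₂ n₁ n₂ n₃
  have hsymb : M = symbolMatrix c x₁ x₂ := by
    rw [hM, symbolMatrix, horizontalRatio_mul_meridianCoord hn,
      horizontalRatio_mul_meridianCoord hn, horizontalRatio_sq hn]
  have hep : epvec n₁ n₂ n₃ = symbolEigenvector I c x₁ x₂ := rfl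
  have hem : emvec n₁ n₂ n₃ = symbolEigenvector (-I) c x₁ x₂ := by
    funext i
    rw [symbolEigenvector, neg_neg]
    rfl
  have he0 : e0vec n₁ n₂ n₃ =
      ![((-n₂ / √(n₁ ^ 2 + n₂ ^ 2) : ℝ) : ℂ), ((n₁ / √(n₁ ^ 2 + n₂ ^ 2) : ℝ) : ℂ), 0, 0] :=
    rfl
  have hw : x₁ ^ 2 + x₂ ^ 2 + c ^ 2 = 1 := meridianCoord_sq_add_sq_add_horizontalRatio_sq hn
  rw [hsymb, hep, hem, he0]
  refine ⟨symbolMatrix_mulVec_horizontal .., symbolMatrix_mulVec_symbolEigenvector I_sq ..,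
    ?_, ?_, ?_, ?_, ?_, ?_, ?_⟩
  · rw [← neg_mul]
    exact symbolMatrix_mulVec_symbolEigenvector (by rw [neg_sq, I_sq]) ..
  · rw [herm4_horizontal, neg_div_sqrt_sq_add_div_sqrt_sq hn, ofReal_one]
  · simp [herm4_symbolEigenvector _ _ hw]
  · simp [herm4_symbolEigenvector _ _ hw]
  · rw [herm4_horizontal_symbolEigenvector,
      neg_div_sqrt_mul_meridianCoord_add_div_sqrt_mul_meridianCoord, ofReal_zero, mul_zero]
  · rw [herm4_horizontal_symbolEigenvector,
      neg_div_sqrt_mul_meridianCoord_add_div_sqrt_mul_meridianCoord, ofReal_zero, mul_zero]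
  · simp [herm4_symbolEigenvector _ _ hw]
end

section
/- Fix k_h ∈ ℤ² and n ∈ ℤ³ with k_h ≠ 0, n_h - k_h ≠ 0, n_h ≠ 0. The set of k₃ ∈ ℤ such that ωᵃ(k_h,k₃) + ωᵇ(n_h-k_h, n₃-k₃) = ω^c(n) for some fixed choice of signs a,b,c ∈ {+,-}, where ω^±(p) = ±|p_h|/|p|, is finite, with cardinality at most 8. -/
/-!
Write `a, b, c` for the squared horizontal lengths of `k`, `n - k`, `n` and `u, v, w` for their
squared full lengths, so that the three frequencies satisfy `f² u = a`, `g² v = b`, `h² w = c`.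
Squaring `f + g = h` gives `2 f g = h² - f² - g²`, and squaring once more eliminates every square
root: `(c u v - a w v - b w u)² = 4 a b w² u v`. As a polynomial in `k₃` this has degree `8` with
leading coefficient `c²`, which is nonzero because `n_h ≠ 0`, so it has at most `8` roots.
-/

/-- The frequency `ω⁺` as a function of the three integer components. -/
noncomputable def omega3 (p₁ p₂ p₃ : ℤ) : ℝ :=
  Real.sqrt ((p₁ : ℝ) ^ 2 + (p₂ : ℝ) ^ 2) /
    Real.sqrt ((p₁ : ℝ) ^ 2 + (p₂ : ℝ) ^ 2 + (p₃ : ℝ) ^ 2)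

open Polynomial

theorem resonance_relation_of_add_eq {R : Type*} [CommRing R] {f g h u v w a b c : R}
    (ha : f ^ 2 * u = a) (hb : g ^ 2 * v = b) (hc : h ^ 2 * w = c) (hfgh : f + g = h) :
    (c * u * v - a * w * v - b * w * u) ^ 2 = 4 * a * b * w ^ 2 * (u * v) := by
  subst ha hb hc hfgh
  ring

theorem sq_sign_mul_omega3_mul {ε : ℝ} (hε : ε ^ 2 = 1) (p₁ p₂ p₃ : ℤ) :
    (ε * omega3 p₁ p₂ p₃) ^ 2 * ((p₁ : ℝ) ^ 2 + (p₂ : ℝ) ^ 2 + (p₃ : ℝ) ^ 2)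
      = (p₁ : ℝ) ^ 2 + (p₂ : ℝ) ^ 2 := by
  rw [omega3, mul_pow, hε, one_mul, div_pow, Real.sq_sqrt (by positivity),
    Real.sq_sqrt (by positivity)]
  rcases eq_or_ne ((p₁ : ℝ) ^ 2 + (p₂ : ℝ) ^ 2 + (p₃ : ℝ) ^ 2) 0 with h0 | h0
  · have hh : (p₁ : ℝ) ^ 2 + (p₂ : ℝ) ^ 2 = 0 :=
      le_antisymm (h0 ▸ le_add_of_nonneg_right (sq_nonneg _)) (by positivity)
    rw [hh, zero_div, zero_mul]
  · exact div_mul_cancel₀ _ h0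

section

variable {R : Type*} [CommRing R]

noncomputable def resonancePoly (a b c t : R) : R[X] :=
  let u := C a + X ^ 2
  let v := C b + (C t - X) ^ 2
  let w := C (c + t ^ 2)
  (C c * u * v - C a * w * v - C b * w * u) ^ 2 - C (4 * a * b) * w ^ 2 * (u * v)

theorem resonancePoly_eval (a b c t x : R) :
    (resonancePoly a b c t).eval x =
      (c * (a + x ^ 2) * (b + (t - x) ^ 2) - a * (c + t ^ 2) * (b + (t - x) ^ 2)
          - b * (c + t ^ 2) * (a + x ^ 2)) ^ 2
        - 4 * a * b * (c + t ^ 2) ^ 2 * ((a + x ^ 2) * (b + (t - x) ^ 2)) := by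
  simp [resonancePoly]

theorem resonancePoly_natDegree [IsDomain R] (a b t : R) {c : R} (hc : c ≠ 0) :
    (resonancePoly a b c t).natDegree = 8 := by
  unfold resonancePoly
  dsimp only
  compute_degree!

end

theorem Polynomial.finite_and_ncard_le_natDegree_of_isRoot {R : Type*} [CommRing R] [IsDomain R]
    [CharZero R] {p : R[X]} (hp : p ≠ 0) {S : Set ℤ} (hS : ∀ k ∈ S, p.IsRoot k) :
    S.Finite ∧ S.ncard ≤ p.natDegree := by
  have hmaps : Set.MapsTo ((↑) : ℤ → R) S (p.rootSet R) := fun k hk => by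
    simpa [mem_rootSet_of_ne hp] using hS k hk
  refine ⟨((p.rootSet_finite R).preimage Int.cast_injective.injOn).subset hmaps, ?_⟩
  calc S.ncard ≤ (p.rootSet R).ncard :=
        Set.ncard_le_ncard_of_injOn _ hmaps Int.cast_injective.injOn (p.rootSet_finite R)
    _ ≤ p.natDegree := p.ncard_rootSet_le R

theorem isRoot_resonancePoly_of_resonant {k₁ k₂ k₃ : ℤ} {n : ℤ × ℤ × ℤ} {εa εb εc : ℝ}
    (ha : εa ^ 2 = 1) (hb : εb ^ 2 = 1) (hc : εc ^ 2 = 1)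
    (hres : εa * omega3 k₁ k₂ k₃ + εb * omega3 (n.1 - k₁) (n.2.1 - k₂) (n.2.2 - k₃)
        = εc * omega3 n.1 n.2.1 n.2.2) :
    (resonancePoly ((k₁ : ℝ) ^ 2 + (k₂ : ℝ) ^ 2) (((n.1 : ℝ) - k₁) ^ 2 + ((n.2.1 : ℝ) - k₂) ^ 2)
      ((n.1 : ℝ) ^ 2 + (n.2.1 : ℝ) ^ 2) n.2.2).IsRoot k₃ := by
  have hrel := resonance_relation_of_add_eq (sq_sign_mul_omega3_mul ha k₁ k₂ k₃)
    (sq_sign_mul_omega3_mul hb _ _ _) (sq_sign_mul_omega3_mul hc _ _ _) hres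
  push_cast at hrel
  rw [IsRoot, resonancePoly_eval, sub_eq_zero]
  exact hrel

theorem resonant_fiber_finite_general (k₁ k₂ : ℤ) (n : ℤ × ℤ × ℤ)
    (εa εb εc : ℝ)
    (ha : εa = 1 ∨ εa = -1) (hb : εb = 1 ∨ εb = -1) (hc : εc = 1 ∨ εc = -1)
    (hnh : (n.1, n.2.1) ≠ (0, 0)) :
    {k₃ : ℤ | εa * omega3 k₁ k₂ k₃ + εb * omega3 (n.1 - k₁) (n.2.1 - k₂) (n.2.2 - k₃)
        = εc * omega3 n.1 n.2.1 n.2.2}.Finite ∧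
    {k₃ : ℤ | εa * omega3 k₁ k₂ k₃ + εb * omega3 (n.1 - k₁) (n.2.1 - k₂) (n.2.2 - k₃)
        = εc * omega3 n.1 n.2.1 n.2.2}.ncard ≤ 8 := by
  have hsq : ∀ {ε : ℝ}, ε = 1 ∨ ε = -1 → ε ^ 2 = 1 := by rintro ε (rfl | rfl) <;> norm_num
  have hn : (n.1 : ℝ) ^ 2 + (n.2.1 : ℝ) ^ 2 ≠ 0 := by
    contrapose! hnh
    rw [sq, sq, mul_self_add_mul_self_eq_zero, Int.cast_eq_zero, Int.cast_eq_zero] at hnh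
    rw [hnh.1, hnh.2]
  have hdeg := resonancePoly_natDegree ((k₁ : ℝ) ^ 2 + (k₂ : ℝ) ^ 2)
    (((n.1 : ℝ) - k₁) ^ 2 + ((n.2.1 : ℝ) - k₂) ^ 2) (n.2.2 : ℝ) hn
  have hp : resonancePoly _ _ _ _ ≠ 0 := ne_zero_of_natDegree_gt (n := 0) (by rw [hdeg]; norm_num)
  rw [← hdeg]
  exact finite_and_ncard_le_natDegree_of_isRoot hp fun k₃ hk =>
    isRoot_resonancePoly_of_resonant (hsq ha) (hsq hb) (hsq hc) hk

/-- for fixed `k_h ∈ ℤ²` and `n ∈ ℤ³` with `k_h ≠ 0`, `n_h - k_h ≠ 0`,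
`n_h ≠ 0`, and for any fixed signs `a, b, c ∈ {+, -}`, the set of `k₃ ∈ ℤ` satisfying
the resonance `ωᵃ(k_h,k₃) + ωᵇ(n_h-k_h, n₃-k₃) = ω^c(n)` is finite, of cardinality
at most `8`. -/
theorem resonant_fiber_finite (k₁ k₂ : ℤ) (n : ℤ × ℤ × ℤ)
    (εa εb εc : ℝ)
    (ha : εa = 1 ∨ εa = -1) (hb : εb = 1 ∨ εb = -1) (hc : εc = 1 ∨ εc = -1)
    (hkh : (k₁, k₂) ≠ (0, 0)) (hmh : (n.1 - k₁, n.2.1 - k₂) ≠ (0, 0))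
    (hnh : (n.1, n.2.1) ≠ (0, 0)) :
    {k₃ : ℤ | εa * omega3 k₁ k₂ k₃ + εb * omega3 (n.1 - k₁) (n.2.1 - k₂) (n.2.2 - k₃)
        = εc * omega3 n.1 n.2.1 n.2.2}.Finite ∧
    {k₃ : ℤ | εa * omega3 k₁ k₂ k₃ + εb * omega3 (n.1 - k₁) (n.2.1 - k₂) (n.2.2 - k₃)
        = εc * omega3 n.1 n.2.1 n.2.2}.ncard ≤ 8 :=
  resonant_fiber_finite_general k₁ k₂ n εa εb εc ha hb hc hnh
end

section
/- Let (a_n), (b_n), (c_n) be families of nonnegative reals indexed by n ∈ ℤ³, each square-summable with weights: Σ_n (1+|n|)|a_n|² < ∞, Σ_n (1+|n|)|b_n|² < ∞, Σ_n |c_n|² < ∞. Suppose for each (k_h, n) ∈ ℤ² × ℤ³ the fiber J(k_h,n) ⊆ ℤ (a subset of the k₃-values) satisfies #J(k_h,n) ≤ 8. Then Σ_{(k_h,n)} Σ_{k₃ ∈ J(k_h,n)} a_{(k_h,k₃)} b_{n-(k_h,k₃)} c_n ≤ C ‖a‖_{H^{1/2}} ‖b‖_{H^{1/2}} ‖c‖_{L²},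 where the norms are ‖a‖²_{H^{1/2}} = Σ_n (1+|n|²)^{1/2}|a_n|², etc., and C is a universal constant. -/
/-- `|n|²` for a frequency `n ∈ ℤ³`. -/
noncomputable def freqSq (n : ℤ × ℤ × ℤ) : ℝ :=
  (n.1 : ℝ) ^ 2 + (n.2.1 : ℝ) ^ 2 + (n.2.2 : ℝ) ^ 2

/-!
Cauchy–Schwarz over the at most eight points of each fibre, and then in the vertical frequency
`k₃`, bounds the sum by `√8 ⟨A ∗ B, Γ⟩` on `ℤ²`, where `A k_h = ‖a (k_h, ·)‖_{ℓ²}` and likewise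
`B`, `Γ`: the vertical convolution of `a²` and `b²` factorises as `A² B²`. What remains is the
two-dimensional endpoint product law `⟨f ∗ g, h⟩ ≲ ‖f‖_{H^{1/2}} ‖g‖_{H^{1/2}} ‖h‖_{L²}`.
Split `f` and `g` into pieces `f_i`, `g_j` supported where `1 + |k|₁ ≈ 4 ^ i`. For `i ≤ j`,
Young's inequality and Cauchy–Schwarz on the `O(16 ^ i)` points of the shell give
`⟨f_i ∗ g_j, h⟩ ≲ 4 ^ i ‖f_i‖ ‖g_j‖ ‖h‖ = 2 ^ (i - j) (2 ^ i ‖f_i‖) (2 ^ j ‖g_j‖) ‖h‖`,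
and Schur's test for the kernel `2 ^ (-|i - j|)` sums these over `i, j`.
The estimates are carried out in `ℝ≥0∞`, where every sum exists; summability is needed only to
return to `ℝ`.
-/

open scoped ENNReal
open Finset

namespace TrilinearEstimate

section L2

variable {ι κ : Type*}

noncomputable def l2Norm (f : ι → ℝ≥0∞) : ℝ≥0∞ := (∑' i, f i ^ 2) ^ (2⁻¹ : ℝ)

lemma sq_rpow_inv_two (x : ℝ≥0∞) : (x ^ 2) ^ (2⁻¹ : ℝ) = x := by
  simpa using ENNReal.pow_rpow_inv_natCast two_ne_zero x

lemma rpow_inv_two_sq (x : ℝ≥0∞) : (x ^ (2⁻¹ : ℝ)) ^ 2 = x := by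
  simpa using ENNReal.rpow_inv_natCast_pow two_ne_zero x

lemma mul_rpow_inv_two (x y : ℝ≥0∞) : (x * y) ^ (2⁻¹ : ℝ) = x ^ (2⁻¹ : ℝ) * y ^ (2⁻¹ : ℝ) :=
  ENNReal.mul_rpow_of_nonneg _ _ (by norm_num)

lemma l2Norm_sq (f : ι → ℝ≥0∞) : l2Norm f ^ 2 = ∑' i, f i ^ 2 := rpow_inv_two_sq _

lemma l2Norm_const_mul (c : ℝ≥0∞) (f : ι → ℝ≥0∞) :
    l2Norm (fun i => c * f i) = c * l2Norm f := by
  simp only [l2Norm, mul_pow, ENNReal.tsum_mul_left, mul_rpow_inv_two, sq_rpow_inv_two]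

lemma sum_mul_le_sqrt_mul_sqrt (s : Finset ι) (f g : ι → ℝ≥0∞) :
    ∑ i ∈ s, f i * g i ≤
      (∑ i ∈ s, f i ^ 2) ^ (2⁻¹ : ℝ) * (∑ i ∈ s, g i ^ 2) ^ (2⁻¹ : ℝ) := by
  simpa only [ENNReal.rpow_two, one_div] using
    ENNReal.inner_le_Lp_mul_Lq s f g Real.HolderConjugate.two_two

lemma tsum_mul_le_l2Norm_mul_l2Norm (f g : ι → ℝ≥0∞) :
    ∑' i, f i * g i ≤ l2Norm f * l2Norm g := by
  rw [ENNReal.tsum_eq_iSup_sum]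
  refine iSup_le fun s => (sum_mul_le_sqrt_mul_sqrt s f g).trans ?_
  unfold l2Norm
  gcongr <;> exact ENNReal.sum_le_tsum s

lemma sum_le_sqrt_card_mul_l2Norm (s : Finset ι) (f : ι → ℝ≥0∞) :
    ∑ i ∈ s, f i ≤ (#s : ℝ≥0∞) ^ (2⁻¹ : ℝ) * l2Norm f := by
  calc ∑ i ∈ s, f i = ∑ i ∈ s, 1 * f i := by simp only [one_mul]
    _ ≤ (∑ i ∈ s, (1 : ℝ≥0∞) ^ 2) ^ (2⁻¹ : ℝ) * (∑ i ∈ s, f i ^ 2) ^ (2⁻¹ : ℝ) :=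
      sum_mul_le_sqrt_mul_sqrt s _ f
    _ ≤ (#s : ℝ≥0∞) ^ (2⁻¹ : ℝ) * l2Norm f := by
      unfold l2Norm
      gcongr
      · simp
      · exact ENNReal.sum_le_tsum s

/-- Schur's test. -/
theorem tsum_tsum_mul_le_of_row_col (K : ι → κ → ℝ≥0∞) {S : ℝ≥0∞}
    (hrow : ∀ i, ∑' j, K i j ≤ S) (hcol : ∀ j, ∑' i, K i j ≤ S) (X : ι → ℝ≥0∞) (Y : κ → ℝ≥0∞) :
    ∑' i, ∑' j, K i j * X i * Y j ≤ S * l2Norm X * l2Norm Y := by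
  have hsplit : ∀ i j, K i j * X i * Y j =
      (K i j * X i ^ 2) ^ (2⁻¹ : ℝ) * (K i j * Y j ^ 2) ^ (2⁻¹ : ℝ) := fun i j => by
    rw [← mul_rpow_inv_two, ← sq_rpow_inv_two (K i j * X i * Y j)]
    congr 1
    ring
  have hX : ∑' i, ∑' j, K i j * X i ^ 2 ≤ S * ∑' i, X i ^ 2 := by
    simp_rw [ENNReal.tsum_mul_right]
    calc ∑' i, (∑' j, K i j) * X i ^ 2 ≤ ∑' i, S * X i ^ 2 := by gcongr with i; exact hrow i
      _ = S * ∑' i, X i ^ 2 := ENNReal.tsum_mul_left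
  have hY : ∑' i, ∑' j, K i j * Y j ^ 2 ≤ S * ∑' j, Y j ^ 2 := by
    rw [ENNReal.tsum_comm]
    simp_rw [ENNReal.tsum_mul_right]
    calc ∑' j, (∑' i, K i j) * Y j ^ 2 ≤ ∑' j, S * Y j ^ 2 := by gcongr with j; exact hcol j
      _ = S * ∑' j, Y j ^ 2 := ENNReal.tsum_mul_left
  calc ∑' i, ∑' j, K i j * X i * Y j
      = ∑' p : ι × κ,
          (K p.1 p.2 * X p.1 ^ 2) ^ (2⁻¹ : ℝ) * (K p.1 p.2 * Y p.2 ^ 2) ^ (2⁻¹ : ℝ) := by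
        rw [ENNReal.tsum_prod']
        exact tsum_congr fun i => tsum_congr fun j => hsplit i j
    _ ≤ (∑' i, ∑' j, K i j * X i ^ 2) ^ (2⁻¹ : ℝ) * (∑' i, ∑' j, K i j * Y j ^ 2) ^ (2⁻¹ : ℝ) := by
        refine (tsum_mul_le_l2Norm_mul_l2Norm _ _).trans_eq ?_
        simp only [l2Norm, rpow_inv_two_sq]
        rw [ENNReal.tsum_prod', ENNReal.tsum_prod']
    _ ≤ (S * ∑' i, X i ^ 2) ^ (2⁻¹ : ℝ) * (S * ∑' j, Y j ^ 2) ^ (2⁻¹ : ℝ) := by gcongr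
    _ = S * l2Norm X * l2Norm Y := by
        rw [mul_rpow_inv_two, mul_rpow_inv_two, l2Norm, l2Norm, ← rpow_inv_two_sq S,
          sq_rpow_inv_two]
        ring

end L2

section Convolution

variable {G : Type*} [AddCommGroup G]

/-- `⟨f ∗ g, h⟩`. -/
noncomputable def convPairing (f g h : G → ℝ≥0∞) : ℝ≥0∞ :=
  ∑' k, ∑' m, f k * g (m - k) * h m

lemma convPairing_comm (f g h : G → ℝ≥0∞) : convPairing f g h = convPairing g f h := by
  unfold convPairing
  rw [ENNReal.tsum_comm, ENNReal.tsum_comm (f := fun k m => g k * f (m - k) * h m)]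
  refine tsum_congr fun m => ?_
  rw [← (Equiv.subLeft m).tsum_eq]
  simp only [Equiv.subLeft_apply, sub_sub_cancel, mul_comm (f _)]

lemma convPairing_tsum_left {ι : Type*} (f : ι → G → ℝ≥0∞) (g h : G → ℝ≥0∞) :
    convPairing (fun k => ∑' i, f i k) g h = ∑' i, convPairing (f i) g h := by
  unfold convPairing
  simp_rw [← ENNReal.tsum_mul_right]
  conv_lhs => enter [1, k]; rw [ENNReal.tsum_comm]
  exact ENNReal.tsum_comm

lemma convPairing_tsum_middle {ι : Type*} (f : G → ℝ≥0∞) (g : ι → G → ℝ≥0∞) (h : G → ℝ≥0∞) :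
    convPairing f (fun k => ∑' i, g i k) h = ∑' i, convPairing f (g i) h := by
  simp_rw [convPairing_comm f, convPairing_tsum_left]

/-- Young's inequality `‖φ ∗ ψ‖₂ ≤ ‖φ‖₁ ‖ψ‖₂`, in dual form. -/
theorem convPairing_le_tsum_mul_l2Norm (φ ψ h : G → ℝ≥0∞) :
    convPairing φ ψ h ≤ (∑' k, φ k) * l2Norm ψ * l2Norm h := by
  rw [convPairing_comm]
  refine le_of_eq_of_le (tsum_congr fun k => tsum_congr fun m => by ring)
    (tsum_tsum_mul_le_of_row_col (fun k m => φ (m - k)) (fun k => ?_) (fun m => ?_) ψ h)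
  · exact ((Equiv.subRight k).tsum_eq φ).le
  · exact ((Equiv.subLeft m).tsum_eq φ).le

end Convolution

lemma tsum_indicator_preimage_singleton {α β : Type*} (ℓ : α → β) (F : α → ℝ≥0∞) (x : α) :
    ∑' i, (ℓ ⁻¹' {i}).indicator F x = F x := by
  rw [tsum_eq_single (ℓ x) fun i hi => Set.indicator_of_notMem (s := ℓ ⁻¹' {i}) (Ne.symm hi) F]
  exact Set.indicator_of_mem (s := ℓ ⁻¹' {ℓ x}) rfl F

section Dyadic

def level (k : ℤ × ℤ) : ℕ := Nat.log 4 (1 + k.1.natAbs + k.2.natAbs)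

lemma four_pow_level_le (k : ℤ × ℤ) : 4 ^ level k ≤ 1 + k.1.natAbs + k.2.natAbs :=
  Nat.pow_log_le_self 4 (by omega)

noncomputable def dyadicPiece (i : ℕ) (f : ℤ × ℤ → ℝ≥0∞) : ℤ × ℤ → ℝ≥0∞ :=
  (level ⁻¹' {i}).indicator f

lemma tsum_dyadicPiece (f : ℤ × ℤ → ℝ≥0∞) (k : ℤ × ℤ) : ∑' i, dyadicPiece i f k = f k :=
  tsum_indicator_preimage_singleton level f k

/-- `4 ^ (i + 2)` is the square root of the size of a box containing the `i`-th shell. -/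
lemma tsum_dyadicPiece_le (i : ℕ) (f : ℤ × ℤ → ℝ≥0∞) :
    ∑' k, dyadicPiece i f k ≤ 4 ^ (i + 2) * l2Norm (dyadicPiece i f) := by
  set M : ℕ := 4 ^ (i + 1)
  set box := Icc (-(M : ℤ)) M ×ˢ Icc (-(M : ℤ)) M
  have hsupp : ∀ k ∉ box, dyadicPiece i f k = 0 := by
    intro k hk
    refine Set.indicator_of_notMem (fun hki => hk ?_) f
    have hlt : 1 + k.1.natAbs + k.2.natAbs < 4 ^ (level k + 1) :=
      Nat.lt_pow_succ_log_self (by norm_num) _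
    rw [show level k = i from hki] at hlt
    simp only [box, mem_product, mem_Icc]
    omega
  have hcard : #box ≤ 16 ^ (i + 2) := by
    rw [card_product, Int.card_Icc, show ((M : ℤ) + 1 - -M).toNat = 2 * M + 1 by omega]
    calc (2 * M + 1) * (2 * M + 1) ≤ (4 * M) * (4 * M) := by
          have : 1 ≤ M := Nat.one_le_pow _ _ (by norm_num)
          gcongr <;> omega
      _ = 16 ^ (i + 2) := by rw [show 16 = 4 ^ 2 by rfl, ← pow_mul]; ring
  rw [tsum_eq_sum hsupp]
  refine (sum_le_sqrt_card_mul_l2Norm _ _).trans ?_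
  gcongr
  calc (#box : ℝ≥0∞) ^ (2⁻¹ : ℝ) ≤ ((16 : ℝ≥0∞) ^ (i + 2)) ^ (2⁻¹ : ℝ) := by
        gcongr; exact_mod_cast hcard
    _ = 4 ^ (i + 2) := by
        rw [show (16 : ℝ≥0∞) = 4 ^ 2 by norm_num, ← pow_mul, mul_comm, pow_mul, sq_rpow_inv_two]

noncomputable def dyadicNorms (f : ℤ × ℤ → ℝ≥0∞) (i : ℕ) : ℝ≥0∞ :=
  2 ^ i * l2Norm (dyadicPiece i f)

lemma l2Norm_dyadicNorms (f : ℤ × ℤ → ℝ≥0∞) :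
    l2Norm (dyadicNorms f) = l2Norm (fun k => 2 ^ level k * f k) := by
  have hpiece : ∀ i k, (2 ^ i * dyadicPiece i f k) ^ 2 =
      dyadicPiece i (fun k => (2 ^ level k * f k) ^ 2) k := by
    intro i k
    by_cases hk : level k = i
    · simp only [dyadicPiece, Set.indicator_of_mem (show k ∈ level ⁻¹' {i} from hk), hk]
    · simp only [dyadicPiece, Set.indicator_of_notMem (show k ∉ level ⁻¹' {i} from hk)]
      simp
  unfold l2Norm
  congr 1
  calc ∑' i, dyadicNorms f i ^ 2
      = ∑' i, ∑' k, dyadicPiece i (fun k => (2 ^ level k * f k) ^ 2) k := by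
        refine tsum_congr fun i => ?_
        rw [dyadicNorms, ← l2Norm_const_mul, l2Norm_sq]
        exact tsum_congr (hpiece i)
    _ = ∑' k, (2 ^ level k * f k) ^ 2 := by
        rw [ENNReal.tsum_comm]
        exact tsum_congr fun k => tsum_dyadicPiece _ k

lemma convPairing_dyadicPiece_le_of_le {i j : ℕ} (hij : i ≤ j) (f g h : ℤ × ℤ → ℝ≥0∞) :
    convPairing (dyadicPiece i f) (dyadicPiece j g) h ≤
      16 * l2Norm h * (2⁻¹ ^ Nat.dist i j * dyadicNorms f i * dyadicNorms g j) := by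
  obtain ⟨d, rfl⟩ := Nat.exists_eq_add_of_le hij
  have hd : (2⁻¹ : ℝ≥0∞) ^ d * 2 ^ d = 1 := by
    rw [← mul_pow, ENNReal.inv_mul_cancel two_ne_zero ENNReal.ofNat_ne_top, one_pow]
  calc convPairing (dyadicPiece i f) (dyadicPiece (i + d) g) h
      ≤ (∑' k, dyadicPiece i f k) * l2Norm (dyadicPiece (i + d) g) * l2Norm h :=
        convPairing_le_tsum_mul_l2Norm _ _ _
    _ ≤ 4 ^ (i + 2) * l2Norm (dyadicPiece i f) * l2Norm (dyadicPiece (i + d) g) * l2Norm h := by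
        gcongr; exact tsum_dyadicPiece_le i f
    _ = 16 * l2Norm h * (2⁻¹ ^ Nat.dist i (i + d) * dyadicNorms f i * dyadicNorms g (i + d)) := by
        rw [Nat.dist_eq_sub_of_le hij, Nat.add_sub_cancel_left, dyadicNorms, dyadicNorms,
          show (4 : ℝ≥0∞) ^ (i + 2) = 16 * (2 ^ i * 2 ^ i) * (2⁻¹ ^ d * 2 ^ d) by
            rw [hd, ← mul_pow]; norm_num [pow_add, mul_comm], pow_add (2 : ℝ≥0∞) i d]
        ring

lemma convPairing_dyadicPiece_le (i j : ℕ) (f g h : ℤ × ℤ → ℝ≥0∞) :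
    convPairing (dyadicPiece i f) (dyadicPiece j g) h ≤
      16 * l2Norm h * (2⁻¹ ^ Nat.dist i j * dyadicNorms f i * dyadicNorms g j) := by
  rcases le_total i j with hij | hji
  · exact convPairing_dyadicPiece_le_of_le hij f g h
  · rw [convPairing_comm, Nat.dist_comm]
    exact (convPairing_dyadicPiece_le_of_le hji g f h).trans_eq (by ring)

lemma tsum_inv_two_pow_dist_le (i : ℕ) : ∑' j, (2⁻¹ : ℝ≥0∞) ^ Nat.dist i j ≤ 4 := by
  have hinj : Function.Injective fun j : ℕ => (j : ℤ) - i := fun j j' h => by simpa using h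
  have hgeom : ∑' n : ℕ, (2⁻¹ : ℝ≥0∞) ^ n = 2 := by
    rw [ENNReal.tsum_geometric, ENNReal.one_sub_inv_two, inv_inv]
  calc ∑' j, (2⁻¹ : ℝ≥0∞) ^ Nat.dist i j = ∑' j : ℕ, (2⁻¹ : ℝ≥0∞) ^ ((j : ℤ) - i).natAbs := by
        refine tsum_congr fun j => congrArg _ ?_
        unfold Nat.dist; omega
    _ ≤ ∑' z : ℤ, (2⁻¹ : ℝ≥0∞) ^ z.natAbs :=
        ENNReal.tsum_comp_le_tsum_of_injective hinj fun z : ℤ => (2⁻¹ : ℝ≥0∞) ^ z.natAbs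
    _ = ∑' n : ℕ, (2⁻¹ : ℝ≥0∞) ^ n + ∑' n : ℕ, (2⁻¹ : ℝ≥0∞) ^ (n + 1) :=
        tsum_of_nat_of_neg_add_one ENNReal.summable ENNReal.summable
    _ ≤ 2 + 2 := by
        rw [hgeom]
        gcongr
        exact (ENNReal.tsum_le_tsum fun n =>
          pow_le_pow_right_of_le_one' (by norm_num) n.le_succ).trans hgeom.le
    _ = 4 := by norm_num

/-- The product law `H^{1/2} · H^{1/2} ⊂ L²` on `𝕋²`, on the Fourier side: `4 ^ level k` is
comparable to `⟨k⟩`. -/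
theorem convPairing_le_dyadic (f g h : ℤ × ℤ → ℝ≥0∞) :
    convPairing f g h ≤
      64 * l2Norm (fun k => 2 ^ level k * f k) * l2Norm (fun k => 2 ^ level k * g k) *
        l2Norm h := by
  calc convPairing f g h
      = ∑' i, ∑' j, convPairing (dyadicPiece i f) (dyadicPiece j g) h := by
        simp_rw [← convPairing_tsum_middle, ← convPairing_tsum_left, tsum_dyadicPiece]
    _ ≤ ∑' i, ∑' j, 16 * l2Norm h * (2⁻¹ ^ Nat.dist i j * dyadicNorms f i * dyadicNorms g j) := by
        gcongr with i j; exact convPairing_dyadicPiece_le i j f g h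
    _ = 16 * l2Norm h * ∑' i, ∑' j, 2⁻¹ ^ Nat.dist i j * dyadicNorms f i * dyadicNorms g j := by
        simp_rw [ENNReal.tsum_mul_left]
    _ ≤ 16 * l2Norm h * (4 * l2Norm (dyadicNorms f) * l2Norm (dyadicNorms g)) := by
        gcongr
        refine tsum_tsum_mul_le_of_row_col _ tsum_inv_two_pow_dist_le (fun j => ?_) _ _
        simpa only [Nat.dist_comm] using tsum_inv_two_pow_dist_le j
    _ = 64 * l2Norm (fun k => 2 ^ level k * f k) * l2Norm (fun k => 2 ^ level k * g k) *
          l2Norm h := by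
        rw [l2Norm_dyadicNorms, l2Norm_dyadicNorms]; ring

end Dyadic

section Slices

variable {H V : Type*}

noncomputable def sliceNorm (u : H × V → ℝ≥0∞) (k : H) : ℝ≥0∞ := l2Norm fun z => u (k, z)

lemma l2Norm_sliceNorm (u : H × V → ℝ≥0∞) : l2Norm (sliceNorm u) = l2Norm u := by
  simp only [l2Norm, sliceNorm, rpow_inv_two_sq, ENNReal.tsum_prod']

variable [AddCommGroup H] [AddCommGroup V]

lemma tsum_tsum_mul_sub (u v : V → ℝ≥0∞) :
    ∑' z, ∑' w, u w * v (z - w) = (∑' w, u w) * ∑' z, v z := by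
  rw [ENNReal.tsum_comm, ← ENNReal.tsum_mul_right]
  exact tsum_congr fun w => by rw [ENNReal.tsum_mul_left, ← (Equiv.subRight w).tsum_eq v]; rfl

lemma l2Norm_l2Norm_mul_sub (α β : H × V → ℝ≥0∞) (k m : H) :
    l2Norm (fun z => l2Norm fun w => α (k, w) * β ((m, z) - (k, w))) =
      sliceNorm α k * sliceNorm β (m - k) := by
  simp only [l2Norm, sliceNorm, rpow_inv_two_sq, mul_pow, Prod.mk_sub_mk]
  rw [tsum_tsum_mul_sub (fun w => α (k, w) ^ 2) (fun z => β (m - k, z) ^ 2), mul_rpow_inv_two]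

theorem tsum_tsum_sum_le_convPairing_sliceNorm (α β γ : H × V → ℝ≥0∞)
    (J : H × (H × V) → Finset V) {N : ℕ} (hJ : ∀ p, #(J p) ≤ N) :
    ∑' k, ∑' n, ∑ z ∈ J (k, n), α (k, z) * β (n - (k, z)) * γ n ≤
      (N : ℝ≥0∞) ^ (2⁻¹ : ℝ) * convPairing (sliceNorm α) (sliceNorm β) (sliceNorm γ) := by
  calc ∑' k, ∑' n, ∑ z ∈ J (k, n), α (k, z) * β (n - (k, z)) * γ n
      ≤ ∑' k, ∑' n, (N : ℝ≥0∞) ^ (2⁻¹ : ℝ) *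
          ((l2Norm fun w => α (k, w) * β (n - (k, w))) * γ n) := by
        gcongr with k n
        rw [← sum_mul, ← mul_assoc]
        gcongr
        refine (sum_le_sqrt_card_mul_l2Norm _ _).trans ?_
        gcongr
        exact_mod_cast hJ (k, n)
    _ = (N : ℝ≥0∞) ^ (2⁻¹ : ℝ) * ∑' k, ∑' m, ∑' z,
          (l2Norm fun w => α (k, w) * β ((m, z) - (k, w))) * γ (m, z) := by
        simp_rw [ENNReal.tsum_mul_left, ENNReal.tsum_prod']
    _ ≤ (N : ℝ≥0∞) ^ (2⁻¹ : ℝ) * convPairing (sliceNorm α) (sliceNorm β) (sliceNorm γ) := by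
        unfold convPairing
        gcongr with k m
        refine (tsum_mul_le_l2Norm_mul_l2Norm _ _).trans_eq ?_
        rw [l2Norm_l2Norm_mul_sub]
        rfl

end Slices

section Frequencies

lemma freqSq_nonneg (n : ℤ × ℤ × ℤ) : 0 ≤ freqSq n := by
  unfold freqSq; positivity

lemma rpow_half_le_one_add_sqrt (n : ℤ × ℤ × ℤ) :
    (1 + freqSq n) ^ ((1 : ℝ) / 2) ≤ 1 + Real.sqrt (freqSq n) := by
  rw [← Real.sqrt_eq_rpow, Real.sqrt_le_iff]
  have := Real.sq_sqrt (freqSq_nonneg n)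
  constructor <;> nlinarith [Real.sqrt_nonneg (freqSq n)]

lemma four_pow_level_le_two_mul_rpow (n : ℤ × ℤ × ℤ) :
    (4 : ℝ) ^ level (n.1, n.2.1) ≤ 2 * (1 + freqSq n) ^ ((1 : ℝ) / 2) := by
  have hlevel : (4 : ℝ) ^ level (n.1, n.2.1) ≤ 1 + |(n.1 : ℝ)| + |(n.2.1 : ℝ)| := by
    have h : ((4 ^ level (n.1, n.2.1) : ℕ) : ℝ) ≤ ((1 + n.1.natAbs + n.2.1.natAbs : ℕ) : ℝ) :=
      Nat.cast_le.mpr (four_pow_level_le (n.1, n.2.1))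
    push_cast [Nat.cast_natAbs, Int.cast_abs] at h
    exact h
  have hsqrt : (1 + |(n.1 : ℝ)| + |(n.2.1 : ℝ)|) / 2 ≤ Real.sqrt (1 + freqSq n) := by
    rw [Real.le_sqrt (by positivity) (by linarith [freqSq_nonneg n]), freqSq]
    nlinarith [sq_abs (n.1 : ℝ), sq_abs (n.2.1 : ℝ), sq_nonneg (n.2.2 : ℝ),
      sq_nonneg (|(n.1 : ℝ)| - 1), sq_nonneg (|(n.2.1 : ℝ)| - 1),
      sq_nonneg (|(n.1 : ℝ)| - |(n.2.1 : ℝ)|)]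
  rw [← Real.sqrt_eq_rpow]
  linarith

noncomputable def japaneseBracket (n : ℤ × ℤ × ℤ) : ℝ≥0∞ :=
  ENNReal.ofReal ((1 + freqSq n) ^ ((1 : ℝ) / 2))

lemma two_pow_level_sq_le (n : ℤ × ℤ × ℤ) :
    ((2 : ℝ≥0∞) ^ level (n.1, n.2.1)) ^ 2 ≤ 2 * japaneseBracket n := by
  calc ((2 : ℝ≥0∞) ^ level (n.1, n.2.1)) ^ 2 = ENNReal.ofReal ((4 : ℝ) ^ level (n.1, n.2.1)) := by
        rw [ENNReal.ofReal_pow (by norm_num), ← pow_mul, mul_comm, pow_mul]; norm_num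
    _ ≤ ENNReal.ofReal (2 * (1 + freqSq n) ^ ((1 : ℝ) / 2)) :=
        ENNReal.ofReal_le_ofReal (four_pow_level_le_two_mul_rpow n)
    _ = 2 * japaneseBracket n := by
        rw [ENNReal.ofReal_mul zero_le_two, ENNReal.ofReal_ofNat, japaneseBracket]

lemma l2Norm_two_pow_level_sliceNorm_le (α : ℤ × ℤ × ℤ → ℝ≥0∞) :
    l2Norm (fun k => 2 ^ level k * sliceNorm (α ∘ Equiv.prodAssoc ℤ ℤ ℤ) k) ≤
      (2 * ∑' n, japaneseBracket n * α n ^ 2) ^ (2⁻¹ : ℝ) := by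
  rw [l2Norm]
  gcongr
  calc ∑' k, (2 ^ level k * sliceNorm (α ∘ Equiv.prodAssoc ℤ ℤ ℤ) k) ^ 2
      = ∑' k : ℤ × ℤ, ∑' z, ((2 : ℝ≥0∞) ^ level k) ^ 2 * α (k.1, k.2, z) ^ 2 := by
        simp_rw [mul_pow, sliceNorm, l2Norm_sq, ENNReal.tsum_mul_left]; rfl
    _ ≤ ∑' k : ℤ × ℤ, ∑' z,
          2 * japaneseBracket (k.1, k.2, z) * α (k.1, k.2, z) ^ 2 := by
        gcongr with k z; exact two_pow_level_sq_le (k.1, k.2, z)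
    _ = 2 * ∑' n, japaneseBracket n * α n ^ 2 := by
        symm
        rw [← ENNReal.tsum_mul_left, ← (Equiv.prodAssoc ℤ ℤ ℤ).tsum_eq, ENNReal.tsum_prod']
        simp only [mul_assoc]
        rfl

theorem tsum_sum_resonant_le (α β γ : ℤ × ℤ × ℤ → ℝ≥0∞)
    (J : (ℤ × ℤ) × (ℤ × ℤ × ℤ) → Finset ℤ) {N : ℕ} (hJ : ∀ p, #(J p) ≤ N) :
    ∑' p : (ℤ × ℤ) × (ℤ × ℤ × ℤ),
        ∑ k₃ ∈ J p, α (p.1.1, p.1.2, k₃) * β (p.2 - (p.1.1, p.1.2, k₃)) * γ p.2 ≤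
      128 * (N : ℝ≥0∞) ^ (2⁻¹ : ℝ)
        * (∑' n, japaneseBracket n * α n ^ 2) ^ (2⁻¹ : ℝ)
        * (∑' n, japaneseBracket n * β n ^ 2) ^ (2⁻¹ : ℝ)
        * l2Norm γ := by
  set e := Equiv.prodAssoc ℤ ℤ ℤ
  have hγ : l2Norm (γ ∘ e) = l2Norm γ := by
    simp only [l2Norm, Function.comp_apply, e.tsum_eq fun n => γ n ^ 2]
  have h2 : (2 : ℝ≥0∞) ^ (2⁻¹ : ℝ) * 2 ^ (2⁻¹ : ℝ) = 2 := by rw [← sq, rpow_inv_two_sq]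
  calc ∑' p : (ℤ × ℤ) × (ℤ × ℤ × ℤ),
        ∑ k₃ ∈ J p, α (p.1.1, p.1.2, k₃) * β (p.2 - (p.1.1, p.1.2, k₃)) * γ p.2
      = ∑' k, ∑' n, ∑ z ∈ J (k, e n), (α ∘ e) (k, z) * (β ∘ e) (n - (k, z)) * (γ ∘ e) n := by
        rw [ENNReal.tsum_prod']
        exact tsum_congr fun k => (e.tsum_eq _).symm
    _ ≤ (N : ℝ≥0∞) ^ (2⁻¹ : ℝ) *
          convPairing (sliceNorm (α ∘ e)) (sliceNorm (β ∘ e)) (sliceNorm (γ ∘ e)) :=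
        tsum_tsum_sum_le_convPairing_sliceNorm _ _ _ (fun p => J (p.1, e p.2)) fun p => hJ _
    _ ≤ (N : ℝ≥0∞) ^ (2⁻¹ : ℝ) * (64
          * (2 * ∑' n, japaneseBracket n * α n ^ 2) ^ (2⁻¹ : ℝ)
          * (2 * ∑' n, japaneseBracket n * β n ^ 2) ^ (2⁻¹ : ℝ)
          * l2Norm γ) := by
        gcongr
        refine (convPairing_le_dyadic _ _ _).trans ?_
        rw [l2Norm_sliceNorm, hγ]
        gcongr <;> exact l2Norm_two_pow_level_sliceNorm_le _
    _ = _ := by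
        rw [mul_rpow_inv_two, mul_rpow_inv_two,
          show (128 : ℝ≥0∞) = 64 * (2 ^ (2⁻¹ : ℝ) * 2 ^ (2⁻¹ : ℝ)) by rw [h2]; norm_num]
        ring

end Frequencies

section OfReal

variable {ι : Type*}

lemma tsum_le_of_tsum_ofReal_le {x : ι → ℝ} (hx : ∀ i, 0 ≤ x i) {B : ℝ} (hB : 0 ≤ B)
    (h : ∑' i, ENNReal.ofReal (x i) ≤ ENNReal.ofReal B) : ∑' i, x i ≤ B := by
  have hsum : ∑' i, x i = (∑' i, ENNReal.ofReal (x i)).toReal := by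
    rw [ENNReal.tsum_toReal_eq fun _ => ENNReal.ofReal_ne_top]
    exact tsum_congr fun i => (ENNReal.toReal_ofReal (hx i)).symm
  exact hsum ▸ ENNReal.toReal_le_of_le_ofReal hB h

lemma ofReal_sqrt_tsum {x : ι → ℝ} (hx : ∀ i, 0 ≤ x i) (hs : Summable x) :
    ENNReal.ofReal (Real.sqrt (∑' i, x i)) = (∑' i, ENNReal.ofReal (x i)) ^ (2⁻¹ : ℝ) := by
  rw [Real.sqrt_eq_rpow, ← ENNReal.ofReal_rpow_of_nonneg (tsum_nonneg hx) (by norm_num),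
    ENNReal.ofReal_tsum_of_nonneg hx hs, one_div]

end OfReal

lemma summable_rpow_half_mul_sq {u : ℤ × ℤ × ℤ → ℝ}
    (hu : Summable fun n => (1 + Real.sqrt (freqSq n)) * u n ^ 2) :
    Summable fun n => (1 + freqSq n) ^ ((1 : ℝ) / 2) * u n ^ 2 :=
  hu.of_nonneg_of_le (fun n => by have := freqSq_nonneg n; positivity)
    fun n => mul_le_mul_of_nonneg_right (rpow_half_le_one_add_sqrt n) (sq_nonneg _)

lemma ofReal_sqrt_tsum_rpow_half_mul_sq {u : ℤ × ℤ × ℤ → ℝ} (hu : ∀ n, 0 ≤ u n)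
    (hs : Summable fun n => (1 + freqSq n) ^ ((1 : ℝ) / 2) * u n ^ 2) :
    ENNReal.ofReal (Real.sqrt (∑' n, (1 + freqSq n) ^ ((1 : ℝ) / 2) * u n ^ 2)) =
      (∑' n, japaneseBracket n * ENNReal.ofReal (u n) ^ 2) ^ (2⁻¹ : ℝ) := by
  have hw (n : ℤ × ℤ × ℤ) : 0 ≤ (1 + freqSq n) ^ ((1 : ℝ) / 2) := by
    have := freqSq_nonneg n; positivity
  rw [ofReal_sqrt_tsum (fun n => mul_nonneg (hw n) (sq_nonneg _)) hs]
  simp only [ENNReal.ofReal_mul (hw _), ENNReal.ofReal_pow (hu _), japaneseBracket]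

theorem tsum_sum_resonant_le_real (a b c : ℤ × ℤ × ℤ → ℝ)
    (J : (ℤ × ℤ) × (ℤ × ℤ × ℤ) → Finset ℤ) {N : ℕ}
    (ha : ∀ n, 0 ≤ a n) (hb : ∀ n, 0 ≤ b n) (hc : ∀ n, 0 ≤ c n)
    (hsa : Summable fun n => (1 + freqSq n) ^ ((1 : ℝ) / 2) * a n ^ 2)
    (hsb : Summable fun n => (1 + freqSq n) ^ ((1 : ℝ) / 2) * b n ^ 2)
    (hsc : Summable fun n => c n ^ 2) (hJ : ∀ p, #(J p) ≤ N) :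
    ∑' p : (ℤ × ℤ) × (ℤ × ℤ × ℤ),
        ∑ k₃ ∈ J p, a (p.1.1, p.1.2, k₃) * b (p.2 - (p.1.1, p.1.2, k₃)) * c p.2 ≤
      128 * Real.sqrt N * Real.sqrt (∑' n, (1 + freqSq n) ^ ((1 : ℝ) / 2) * a n ^ 2)
        * Real.sqrt (∑' n, (1 + freqSq n) ^ ((1 : ℝ) / 2) * b n ^ 2)
        * Real.sqrt (∑' n, c n ^ 2) := by
  have hl2 : ENNReal.ofReal (Real.sqrt (∑' n, c n ^ 2)) = l2Norm fun n => ENNReal.ofReal (c n) := by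
    rw [ofReal_sqrt_tsum (fun n => sq_nonneg _) hsc, l2Norm]
    simp only [ENNReal.ofReal_pow (hc _)]
  have hN : ENNReal.ofReal (Real.sqrt N) = (N : ℝ≥0∞) ^ (2⁻¹ : ℝ) := by
    rw [Real.sqrt_eq_rpow, ← ENNReal.ofReal_rpow_of_nonneg N.cast_nonneg (by norm_num),
      ENNReal.ofReal_natCast, one_div]
  refine tsum_le_of_tsum_ofReal_le
    (fun p => sum_nonneg fun _ _ => mul_nonneg (mul_nonneg (ha _) (hb _)) (hc _)) (by positivity) ?_
  calc ∑' p : (ℤ × ℤ) × (ℤ × ℤ × ℤ), ENNReal.ofReal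
        (∑ k₃ ∈ J p, a (p.1.1, p.1.2, k₃) * b (p.2 - (p.1.1, p.1.2, k₃)) * c p.2)
      = ∑' p : (ℤ × ℤ) × (ℤ × ℤ × ℤ), ∑ k₃ ∈ J p, ENNReal.ofReal (a (p.1.1, p.1.2, k₃))
          * ENNReal.ofReal (b (p.2 - (p.1.1, p.1.2, k₃))) * ENNReal.ofReal (c p.2) := by
        refine tsum_congr fun p => ?_
        rw [ENNReal.ofReal_sum_of_nonneg fun _ _ => mul_nonneg (mul_nonneg (ha _) (hb _)) (hc _)]
        refine sum_congr rfl fun _ _ => ?_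
        rw [ENNReal.ofReal_mul (mul_nonneg (ha _) (hb _)), ENNReal.ofReal_mul (ha _)]
    _ ≤ 128 * (N : ℝ≥0∞) ^ (2⁻¹ : ℝ)
        * (∑' n, japaneseBracket n * ENNReal.ofReal (a n) ^ 2) ^ (2⁻¹ : ℝ)
        * (∑' n, japaneseBracket n * ENNReal.ofReal (b n) ^ 2) ^ (2⁻¹ : ℝ)
        * l2Norm (fun n => ENNReal.ofReal (c n)) :=
        tsum_sum_resonant_le _ _ _ J hJ
    _ = _ := by
        rw [ENNReal.ofReal_mul (by positivity), ENNReal.ofReal_mul (by positivity),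
          ENNReal.ofReal_mul (by positivity), ENNReal.ofReal_mul (by positivity), hN,
          ofReal_sqrt_tsum_rpow_half_mul_sq ha hsa, ofReal_sqrt_tsum_rpow_half_mul_sq hb hsb, hl2,
          ENNReal.ofReal_ofNat]

end TrilinearEstimate

/-- trilinear resonant-sum estimate.  If `(a_n), (b_n), (c_n)` are
nonnegative families with `Σ (1+|n|)a_n² < ∞`, `Σ (1+|n|)b_n² < ∞`, `Σ c_n² < ∞`,
and every fiber `J(k_h, n) ⊆ ℤ` has at most `8` elements, then
`Σ_{(k_h,n)} Σ_{k₃ ∈ J(k_h,n)} a_{(k_h,k₃)} b_{n-(k_h,k₃)} c_n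
  ≤ C ‖a‖_{H^{1/2}} ‖b‖_{H^{1/2}} ‖c‖_{L²}` for a universal constant `C`. -/
theorem trilinear_resonant_estimate :
    ∃ C : ℝ, 0 < C ∧
      ∀ (a b c : ℤ × ℤ × ℤ → ℝ) (J : (ℤ × ℤ) × (ℤ × ℤ × ℤ) → Finset ℤ),
        (∀ n, 0 ≤ a n) → (∀ n, 0 ≤ b n) → (∀ n, 0 ≤ c n) →
        Summable (fun n : ℤ × ℤ × ℤ => (1 + Real.sqrt (freqSq n)) * a n ^ 2) →
        Summable (fun n : ℤ × ℤ × ℤ => (1 + Real.sqrt (freqSq n)) * b n ^ 2) →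
        Summable (fun n : ℤ × ℤ × ℤ => c n ^ 2) →
        (∀ p, (J p).card ≤ 8) →
        (∑' p : (ℤ × ℤ) × (ℤ × ℤ × ℤ),
            ∑ k₃ ∈ J p, a (p.1.1, p.1.2, k₃) * b (p.2 - (p.1.1, p.1.2, k₃)) * c p.2)
          ≤ C * Real.sqrt (∑' n : ℤ × ℤ × ℤ, (1 + freqSq n) ^ ((1 : ℝ) / 2) * a n ^ 2)
              * Real.sqrt (∑' n : ℤ × ℤ × ℤ, (1 + freqSq n) ^ ((1 : ℝ) / 2) * b n ^ 2)
              * Real.sqrt (∑' n : ℤ × ℤ × ℤ, c n ^ 2) := by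
  refine ⟨128 * Real.sqrt 8, by positivity, fun a b c J ha hb hc hsa hsb hsc hJ => ?_⟩
  exact_mod_cast TrilinearEstimate.tsum_sum_resonant_le_real a b c J ha hb hc
    (TrilinearEstimate.summable_rpow_half_mul_sq hsa)
    (TrilinearEstimate.summable_rpow_half_mul_sq hsb) hsc hJ
end

section
/- Let s > 1/2. There is a constant C such that for any horizontal vector field u̲ = u̲(x₃) ∈ H^{s+1}(𝕋¹) and any vector field v ∈ H^{s+1}(𝕋³) with ∇_h v ∈ H^s(𝕋³), one has |⟨u̲·∇_h v, v⟩_{H^s(𝕋³)}| ≤ C (‖u̲‖_{H^s(𝕋¹)} + ‖u̲‖_{H^{s+1}(𝕋¹)}) ‖v‖_{H^s(𝕋³)} ‖∇_h v‖_{H^s(𝕋³)}. -/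
open Real

theorem summable_and_tsum_mul_le_sqrt_mul_sqrt {ι : Type*} {f g : ι → ℝ}
    (hf₀ : ∀ i, 0 ≤ f i) (hg₀ : ∀ i, 0 ≤ g i)
    (hf : Summable fun i => f i ^ 2) (hg : Summable fun i => g i ^ 2) :
    (Summable fun i => f i * g i) ∧ ∑' i, f i * g i ≤ √(∑' i, f i ^ 2) * √(∑' i, g i ^ 2) := by
  have h := summable_and_inner_le_Lp_mul_Lq_tsum_of_nonneg Real.HolderConjugate.two_two hf₀ hg₀
    (by simpa [Real.rpow_two] using hf) (by simpa [Real.rpow_two] using hg)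
  simpa [Real.rpow_two, Real.sqrt_eq_rpow] using h

theorem summable_inv_one_add_sq : Summable fun k : ℤ => (1 + (k : ℝ) ^ 2)⁻¹ := by
  refine (((Real.summable_one_div_int_add_rpow (1 / 2) 2).2 one_lt_two).mul_left 2).of_nonneg_of_le
    (fun k => by positivity) fun k => ?_
  have hk : (0 : ℝ) ≤ k * (k + 1) := by
    exact_mod_cast (by rcases le_or_gt 0 k with h | h <;> nlinarith : (0 : ℤ) ≤ k * (k + 1))
  rw [Real.rpow_two, sq_abs, mul_one_div, inv_eq_one_div,
    div_le_div_iff₀ (by positivity) (by nlinarith)]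
  nlinarith [sq_nonneg ((k : ℝ) - 1 / 2)]

theorem norm_mul_add_mul_sq_le (a b x y : ℂ) :
    ‖a * x + b * y‖ ^ 2 ≤ (‖a‖ ^ 2 + ‖b‖ ^ 2) * (‖x‖ ^ 2 + ‖y‖ ^ 2) := by
  calc ‖a * x + b * y‖ ^ 2 ≤ (‖a‖ * ‖x‖ + ‖b‖ * ‖y‖) ^ 2 := by
        gcongr; exact (norm_add_le _ _).trans_eq (by rw [norm_mul, norm_mul])
    _ ≤ _ := by nlinarith [sq_nonneg (‖a‖ * ‖y‖ - ‖b‖ * ‖x‖)]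

section Convolution

variable {ι G : Type*} [AddGroup G] {r : ι → ℝ} {d c : G → ℝ}

theorem summable_and_tsum_translate_mul_le (hd₀ : ∀ n, 0 ≤ d n) (hc₀ : ∀ n, 0 ≤ c n)
    (hd : Summable fun n => d n ^ 2) (hc : Summable fun n => c n ^ 2) (g : G) :
    (Summable fun n => d (n - g) * c n) ∧
      ∑' n, d (n - g) * c n ≤ √(∑' n, d n ^ 2) * √(∑' n, c n ^ 2) := by
  have hdg : ∑' n, d (n - g) ^ 2 = ∑' n, d n ^ 2 := (Equiv.subRight g).tsum_eq (d · ^ 2)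
  rw [← hdg]
  exact summable_and_tsum_mul_le_sqrt_mul_sqrt (fun n => hd₀ _) hc₀
    ((Equiv.subRight g).summable_iff.2 hd) hc

variable (τ : ι → G)

theorem summable_convolution_mul (hr₀ : ∀ i, 0 ≤ r i) (hd₀ : ∀ n, 0 ≤ d n) (hc₀ : ∀ n, 0 ≤ c n)
    (hr : Summable r) (hd : Summable fun n => d n ^ 2) (hc : Summable fun n => c n ^ 2) :
    Summable fun p : G × ι => r p.2 * d (p.1 - τ p.2) * c p.1 := by
  have hslice (i : ι) := summable_and_tsum_translate_mul_le hd₀ hc₀ hd hc (τ i)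
  have hprod : Summable fun p : ι × G => r p.1 * (d (p.2 - τ p.1) * c p.2) := by
    refine (summable_prod_of_nonneg fun p => ?_).2 ⟨fun i => (hslice i).1.mul_left (r i), ?_⟩
    · exact mul_nonneg (hr₀ _) (mul_nonneg (hd₀ _) (hc₀ _))
    refine (hr.mul_right (√(∑' n, d n ^ 2) * √(∑' n, c n ^ 2))).of_nonneg_of_le
      (fun i => tsum_nonneg fun n => ?_) fun i => ?_
    · exact mul_nonneg (hr₀ _) (mul_nonneg (hd₀ _) (hc₀ _))
    · dsimp only
      rw [tsum_mul_left]
      exact mul_le_mul_of_nonneg_left (hslice i).2 (hr₀ i)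
  exact ((Equiv.prodComm G ι).summable_iff.2 hprod).congr fun p => (mul_assoc _ _ _).symm

theorem tsum_tsum_convolution_mul_le (hr₀ : ∀ i, 0 ≤ r i) (hd₀ : ∀ n, 0 ≤ d n)
    (hc₀ : ∀ n, 0 ≤ c n) (hr : Summable r) (hd : Summable fun n => d n ^ 2)
    (hc : Summable fun n => c n ^ 2) :
    ∑' n, ∑' i, r i * d (n - τ i) * c n ≤
      (∑' i, r i) * √(∑' n, d n ^ 2) * √(∑' n, c n ^ 2) := by
  have hF := summable_convolution_mul τ hr₀ hd₀ hc₀ hr hd hc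
  have hslice (i : ι) := summable_and_tsum_translate_mul_le hd₀ hc₀ hd hc (τ i)
  rw [Summable.tsum_comm (f := fun i n => r i * d (n - τ i) * c n) hF.prod_symm, mul_assoc,
    ← tsum_mul_right]
  refine Summable.tsum_le_tsum (fun i => ?_) hF.prod_symm.prod (hr.mul_right _)
  simp_rw [mul_assoc, tsum_mul_left]
  exact mul_le_mul_of_nonneg_left (hslice i).2 (hr₀ i)

end Convolution

theorem sub_vertical_eq (n : ℤ × ℤ × ℤ) (k : ℤ) : n - (0, 0, k) = (n.1, n.2.1, n.2.2 - k) := by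
  ext <;> simp

theorem freqSq_nonneg (n : ℤ × ℤ × ℤ) : 0 ≤ freqSq n := by
  unfold freqSq; positivity

theorem one_add_freqSq_le (n : ℤ × ℤ × ℤ) (k : ℤ) :
    1 + freqSq n ≤ 2 * (1 + (k : ℝ) ^ 2) * (1 + freqSq (n.1, n.2.1, n.2.2 - k)) := by
  simp only [freqSq, Int.cast_sub]
  nlinarith [sq_nonneg ((n.2.2 : ℝ) - 2 * k), sq_nonneg (k : ℝ),
    mul_nonneg (sq_nonneg (k : ℝ)) (add_nonneg (sq_nonneg (n.1 : ℝ)) (sq_nonneg (n.2.1 : ℝ))),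
    mul_nonneg (sq_nonneg (k : ℝ)) (sq_nonneg ((n.2.2 : ℝ) - k))]

theorem one_add_freqSq_rpow_le {s : ℝ} (hs : 0 ≤ s) (n : ℤ × ℤ × ℤ) (k : ℤ) :
    (1 + freqSq n) ^ s ≤
      2 ^ s * (1 + (k : ℝ) ^ 2) ^ s * (1 + freqSq (n.1, n.2.1, n.2.2 - k)) ^ s := by
  have hn := freqSq_nonneg n
  have hm := freqSq_nonneg (n.1, n.2.1, n.2.2 - k)
  rw [← mul_rpow (by positivity) (by positivity), ← mul_rpow (by positivity) (by positivity)]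
  exact rpow_le_rpow (by positivity) (one_add_freqSq_le n k) hs

-- Fourier-side summands of `‖v‖²_{H^s(𝕋³)}`, `‖∇_h v‖²_{H^s(𝕋³)}` and `‖u̲‖²_{H^s(𝕋¹)}`.
noncomputable def sobolevDensity (s : ℝ) (v : ℤ × ℤ × ℤ → ℂ) (n : ℤ × ℤ × ℤ) : ℝ :=
  (1 + freqSq n) ^ s * ‖v n‖ ^ 2

noncomputable def horizGradSobolevDensity (s : ℝ) (v : ℤ × ℤ × ℤ → ℂ) (n : ℤ × ℤ × ℤ) : ℝ :=
  ((n.1 : ℝ) ^ 2 + (n.2.1 : ℝ) ^ 2) * (1 + freqSq n) ^ s * ‖v n‖ ^ 2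

noncomputable def verticalSobolevDensity (s : ℝ) (u1 u2 : ℤ → ℂ) (k : ℤ) : ℝ :=
  (1 + (k : ℝ) ^ 2) ^ s * (‖u1 k‖ ^ 2 + ‖u2 k‖ ^ 2)

-- The `k`-th summand of the Fourier coefficient of `u̲·∇_h v` at `n`.
noncomputable def transportCoeff (u1 u2 : ℤ → ℂ) (v : ℤ × ℤ × ℤ → ℂ) (n : ℤ × ℤ × ℤ) (k : ℤ) :
    ℂ :=
  (Complex.I * (n.1 : ℂ) * u1 k + Complex.I * (n.2.1 : ℂ) * u2 k) * v (n.1, n.2.1, n.2.2 - k)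

section Densities

variable (s : ℝ) (u1 u2 : ℤ → ℂ) (v : ℤ × ℤ × ℤ → ℂ)

theorem sobolevDensity_nonneg (n : ℤ × ℤ × ℤ) : 0 ≤ sobolevDensity s v n := by
  have hn := freqSq_nonneg n
  unfold sobolevDensity; positivity

theorem horizGradSobolevDensity_nonneg (n : ℤ × ℤ × ℤ) : 0 ≤ horizGradSobolevDensity s v n := by
  have hn := freqSq_nonneg n
  unfold horizGradSobolevDensity; positivity

theorem verticalSobolevDensity_nonneg (k : ℤ) : 0 ≤ verticalSobolevDensity s u1 u2 k := by
  unfold verticalSobolevDensity; positivity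

theorem sobolevDensity_le_add_one (n : ℤ × ℤ × ℤ) :
    sobolevDensity s v n ≤ sobolevDensity (s + 1) v n := by
  have hn := freqSq_nonneg n
  unfold sobolevDensity
  gcongr <;> linarith

theorem horizGradSobolevDensity_le (n : ℤ × ℤ × ℤ) :
    horizGradSobolevDensity s v n ≤ sobolevDensity (s + 1) v n := by
  have hn := freqSq_nonneg n
  rw [horizGradSobolevDensity, sobolevDensity, rpow_add_one (by positivity),
    mul_comm ((1 + freqSq n) ^ s)]
  have hh : (n.1 : ℝ) ^ 2 + (n.2.1 : ℝ) ^ 2 ≤ 1 + freqSq n := by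
    unfold freqSq; nlinarith [sq_nonneg (n.2.2 : ℝ)]
  gcongr

end Densities

theorem norm_transportCoeff_mul_le {s : ℝ} (hs : 0 ≤ s) (u1 u2 : ℤ → ℂ) (v : ℤ × ℤ × ℤ → ℂ)
    (n : ℤ × ℤ × ℤ) (k : ℤ) :
    ‖(((1 + freqSq n) ^ s : ℝ) : ℂ) * (transportCoeff u1 u2 v n k * (starRingEnd ℂ) (v n))‖ ≤
      √(2 ^ s) * (√(verticalSobolevDensity s u1 u2 k) *
        √(horizGradSobolevDensity s v (n - (0, 0, k))) * √(sobolevDensity s v n)) := by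
  have hn := freqSq_nonneg n
  rw [sub_vertical_eq, ← sqrt_mul (verticalSobolevDensity_nonneg s u1 u2 k),
    ← sqrt_mul (mul_nonneg (verticalSobolevDensity_nonneg s u1 u2 k)
      (horizGradSobolevDensity_nonneg s v _)), ← sqrt_mul (by positivity)]
  refine le_sqrt_of_sq_le ?_
  have hsymbol := norm_mul_add_mul_sq_le (Complex.I * n.1) (Complex.I * n.2.1) (u1 k) (u2 k)
  simp only [norm_mul, Complex.norm_I, Complex.norm_intCast, one_mul, sq_abs] at hsymbol
  have hm := freqSq_nonneg (n.1, n.2.1, n.2.2 - k)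
  have hw := one_add_freqSq_rpow_le hs n k
  calc ‖(((1 + freqSq n) ^ s : ℝ) : ℂ) * (transportCoeff u1 u2 v n k * (starRingEnd ℂ) (v n))‖ ^ 2
      = (1 + freqSq n) ^ s * (1 + freqSq n) ^ s *
          ‖Complex.I * n.1 * u1 k + Complex.I * n.2.1 * u2 k‖ ^ 2 *
          ‖v (n.1, n.2.1, n.2.2 - k)‖ ^ 2 * ‖v n‖ ^ 2 := by
        rw [transportCoeff, norm_mul, norm_mul, norm_mul, Complex.norm_real, RCLike.norm_conj,
          Real.norm_of_nonneg (by positivity)]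
        ring
    _ ≤ 2 ^ s * (1 + (k : ℝ) ^ 2) ^ s * (1 + freqSq (n.1, n.2.1, n.2.2 - k)) ^ s *
          (1 + freqSq n) ^ s * (((n.1 : ℝ) ^ 2 + (n.2.1 : ℝ) ^ 2) * (‖u1 k‖ ^ 2 + ‖u2 k‖ ^ 2)) *
          ‖v (n.1, n.2.1, n.2.2 - k)‖ ^ 2 * ‖v n‖ ^ 2 := by
        gcongr
    _ = _ := by
        simp only [verticalSobolevDensity, horizGradSobolevDensity, sobolevDensity]
        ring

theorem norm_tsum_transport_le {s : ℝ} (hs : 0 ≤ s) {u1 u2 : ℤ → ℂ} {v : ℤ × ℤ × ℤ → ℂ}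
    (hu : Summable fun k => √(verticalSobolevDensity s u1 u2 k))
    (hv : Summable (sobolevDensity (s + 1) v)) :
    ‖∑' n, (((1 + freqSq n) ^ s : ℝ) : ℂ) *
        ((∑' k, transportCoeff u1 u2 v n k) * (starRingEnd ℂ) (v n))‖ ≤
      √(2 ^ s) * (∑' k, √(verticalSobolevDensity s u1 u2 k)) *
        √(∑' n, sobolevDensity s v n) * √(∑' n, horizGradSobolevDensity s v n) := by
  set r := fun k => √(verticalSobolevDensity s u1 u2 k)
  set d := fun n => √(horizGradSobolevDensity s v n)
  set c := fun n => √(sobolevDensity s v n)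
  have hd_sq (n) : d n ^ 2 = horizGradSobolevDensity s v n :=
    sq_sqrt (horizGradSobolevDensity_nonneg s v n)
  have hc_sq (n) : c n ^ 2 = sobolevDensity s v n := sq_sqrt (sobolevDensity_nonneg s v n)
  have hd : Summable fun n => d n ^ 2 := by
    simp only [hd_sq]
    exact hv.of_nonneg_of_le (horizGradSobolevDensity_nonneg s v) (horizGradSobolevDensity_le s v)
  have hc : Summable fun n => c n ^ 2 := by
    simp only [hc_sq]
    exact hv.of_nonneg_of_le (sobolevDensity_nonneg s v) (sobolevDensity_le_add_one s v)
  have hr₀ (k) : 0 ≤ r k := sqrt_nonneg _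
  have hd₀ (n) : 0 ≤ d n := sqrt_nonneg _
  have hc₀ (n) : 0 ≤ c n := sqrt_nonneg _
  have hF := summable_convolution_mul (fun k : ℤ => ((0, 0, k) : ℤ × ℤ × ℤ)) hr₀ hd₀ hc₀ hu hd hc
  have hterm (n : ℤ × ℤ × ℤ) :
      ‖(((1 + freqSq n) ^ s : ℝ) : ℂ) * ((∑' k, transportCoeff u1 u2 v n k) * (starRingEnd ℂ) (v n))‖
        ≤ ∑' k, √(2 ^ s) * (r k * d (n - (0, 0, k)) * c n) := by
    rw [← tsum_mul_right, ← tsum_mul_left]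
    refine tsum_of_norm_bounded ((hF.prod_factor n).mul_left √(2 ^ s)).hasSum fun k => ?_
    exact (norm_transportCoeff_mul_le hs u1 u2 v n k).trans_eq (by ring)
  calc _ ≤ ∑' n, ∑' k, √(2 ^ s) * (r k * d (n - (0, 0, k)) * c n) :=
        tsum_of_norm_bounded (hF.mul_left √(2 ^ s)).prod.hasSum hterm
    _ = √(2 ^ s) * ∑' n, ∑' k, r k * d (n - (0, 0, k)) * c n := by simp_rw [tsum_mul_left]
    _ ≤ √(2 ^ s) * ((∑' k, r k) * √(∑' n, d n ^ 2) * √(∑' n, c n ^ 2)) := by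
        gcongr
        exact tsum_tsum_convolution_mul_le _ hr₀ hd₀ hc₀ hu hd hc
    _ = _ := by
        simp only [hd_sq, hc_sq]
        ring

theorem summable_and_tsum_sqrt_verticalSobolevDensity_le {s : ℝ} {u1 u2 : ℤ → ℂ}
    (hu : Summable (verticalSobolevDensity (s + 1) u1 u2)) :
    (Summable fun k => √(verticalSobolevDensity s u1 u2 k)) ∧
      ∑' k, √(verticalSobolevDensity s u1 u2 k) ≤
        √(∑' k : ℤ, (1 + (k : ℝ) ^ 2)⁻¹) * √(∑' k, verticalSobolevDensity (s + 1) u1 u2 k) := by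
  have hsplit (k : ℤ) : √(verticalSobolevDensity s u1 u2 k) =
      √((1 + (k : ℝ) ^ 2)⁻¹) * √(verticalSobolevDensity (s + 1) u1 u2 k) := by
    rw [← sqrt_mul (by positivity), verticalSobolevDensity, verticalSobolevDensity,
      rpow_add_one (by positivity)]
    field_simp
  have hf_sq (k : ℤ) : √((1 + (k : ℝ) ^ 2)⁻¹) ^ 2 = (1 + (k : ℝ) ^ 2)⁻¹ := sq_sqrt (by positivity)
  have hg_sq (k : ℤ) : √(verticalSobolevDensity (s + 1) u1 u2 k) ^ 2 =
      verticalSobolevDensity (s + 1) u1 u2 k := sq_sqrt (verticalSobolevDensity_nonneg _ u1 u2 k)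
  have h := summable_and_tsum_mul_le_sqrt_mul_sqrt (fun k => sqrt_nonneg _) (fun k => sqrt_nonneg _)
    (summable_inv_one_add_sq.congr fun k => (hf_sq k).symm) (hu.congr fun k => (hg_sq k).symm)
  simp only [hf_sq, hg_sq] at h
  simpa only [hsplit] using h

/-- for `s > 1/2` there is `C` such that for every horizontal vector
field `u̲ = u̲(x₃) ∈ H^{s+1}(𝕋¹)` (Fourier coefficients `u1, u2` in the vertical
frequency) and every `v ∈ H^{s+1}(𝕋³)` (so `∇_h v ∈ H^s`), one has
`|⟨u̲·∇_h v, v⟩_{H^s(𝕋³)}| ≤ C (‖u̲‖_{H^s(𝕋¹)} + ‖u̲‖_{H^{s+1}(𝕋¹)}) ‖v‖_{H^s(𝕋³)} ‖∇_h v‖_{H^s(𝕋³)}`,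
where `(u̲·∇_h v)^(n) = Σ_{k₃} (i n₁ û̲¹(k₃) + i n₂ û̲²(k₃)) v̂(n_h, n₃-k₃)`. -/
theorem Hs_estimate_vertical_average_transport (s : ℝ) (hs : 1 / 2 < s) :
    ∃ C : ℝ, 0 < C ∧
      ∀ (u1 u2 : ℤ → ℂ) (v : ℤ × ℤ × ℤ → ℂ),
        Summable (fun k : ℤ => (1 + (k : ℝ) ^ 2) ^ (s + 1) * (‖u1 k‖ ^ 2 + ‖u2 k‖ ^ 2)) →
        Summable (fun n : ℤ × ℤ × ℤ => (1 + freqSq n) ^ (s + 1) * ‖v n‖ ^ 2) →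
        ‖∑' n : ℤ × ℤ × ℤ, (((1 + freqSq n) ^ s : ℝ) : ℂ) *
            ((∑' k₃ : ℤ, (Complex.I * (n.1 : ℂ) * u1 k₃ + Complex.I * (n.2.1 : ℂ) * u2 k₃) *
                v (n.1, n.2.1, n.2.2 - k₃)) * (starRingEnd ℂ) (v n))‖
          ≤ C * (Real.sqrt (∑' k : ℤ, (1 + (k : ℝ) ^ 2) ^ s * (‖u1 k‖ ^ 2 + ‖u2 k‖ ^ 2))
                + Real.sqrt (∑' k : ℤ, (1 + (k : ℝ) ^ 2) ^ (s + 1) * (‖u1 k‖ ^ 2 + ‖u2 k‖ ^ 2)))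
              * Real.sqrt (∑' n : ℤ × ℤ × ℤ, (1 + freqSq n) ^ s * ‖v n‖ ^ 2)
              * Real.sqrt (∑' n : ℤ × ℤ × ℤ,
                  ((n.1 : ℝ) ^ 2 + (n.2.1 : ℝ) ^ 2) * (1 + freqSq n) ^ s * ‖v n‖ ^ 2) := by
  have hs₀ : 0 ≤ s := by linarith
  set I₀ := ∑' k : ℤ, (1 + (k : ℝ) ^ 2)⁻¹
  have hI₀ : 0 < I₀ := summable_inv_one_add_sq.tsum_pos (fun k => by positivity) 0 (by norm_num)
  refine ⟨√(2 ^ s) * √I₀, by positivity, fun u1 u2 v hu hv => ?_⟩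
  obtain ⟨hu₁, hu₁_le⟩ := summable_and_tsum_sqrt_verticalSobolevDensity_le hu
  calc _ ≤ √(2 ^ s) * (∑' k, √(verticalSobolevDensity s u1 u2 k)) *
        √(∑' n, sobolevDensity s v n) * √(∑' n, horizGradSobolevDensity s v n) :=
        norm_tsum_transport_le hs₀ hu₁ hv
    _ ≤ √(2 ^ s) * (√I₀ * √(∑' k, verticalSobolevDensity (s + 1) u1 u2 k)) *
        √(∑' n, sobolevDensity s v n) * √(∑' n, horizGradSobolevDensity s v n) := by
        gcongr
    _ ≤ _ := by
        rw [← mul_assoc √(2 ^ s)]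
        gcongr (√(2 ^ s) * √I₀) * ?_ * _ * _
        exact le_add_of_nonneg_left (sqrt_nonneg _)
end
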